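/- Let T > 0 and let M : [0,T] → ℝ be twice continuously differentiable, and let R be the resolvent kernel of M. Then R is twice continuously differentiable on [0,T], and R′ = M′ − M(0)R − M′*R and R″ = M″ − M(0)R′ − M′(0)R − M″*R on [0,T]. -/

import Mathlib

/-!
Differentiating `R = M - M * R` reduces everything to one rule for the Volterra convolution,
`(g * f)' = g 0 • f + g' * f` for continuous `f` and `C¹` `g`. Writing
`g (t - s) = g 0 + ∫ r in s..t, g' (r - s)` and exchanging the order of integration over the
triangle `0 ≤ s ≤ r ≤ t` gives `(g * f) t = g 0 * ∫₀ᵗ f + ∫₀ᵗ (g' * f)`, whose derivative is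
read off from the fundamental theorem of calculus. Functions known only on `[0, T]` are first
extended continuously to `ℝ` by clamping to the interval.
-/

open MeasureTheory Set intervalIntegral

theorem integral_integral_swap_triangle {E : Type*} [NormedAddCommGroup E] [NormedSpace ℝ E]
    {K : ℝ → ℝ → E} (hK : Continuous (Function.uncurry K)) {a b : ℝ} (hab : a ≤ b) :
    ∫ s in a..b, ∫ r in s..b, K r s = ∫ r in a..b, ∫ s in a..r, K r s := by
  set F : ℝ → ℝ → E := fun r s => {x | x ≤ r}.indicator (K r) s
  have hF : Function.uncurry F = {p : ℝ × ℝ | p.2 ≤ p.1}.indicator (Function.uncurry K) := by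
    ext ⟨r, s⟩; simp [F, indicator_apply]
  have hint : IntegrableOn (Function.uncurry F) (uIoc a b ×ˢ uIoc a b) := by
    rw [hF]
    refine IntegrableOn.indicator ?_ (measurableSet_le measurable_snd measurable_fst)
    exact (hK.continuousOn.integrableOn_compact (isCompact_uIcc.prod isCompact_uIcc)).mono_set
      (prod_mono uIoc_subset_uIcc uIoc_subset_uIcc)
  calc ∫ s in a..b, ∫ r in s..b, K r s = ∫ s in a..b, ∫ r in a..b, F r s := by
        refine integral_congr fun s hs => ?_
        rw [uIcc_of_le hab] at hs
        have hF_s : (fun r => F r s) = (Ici s).indicator (fun r => K r s) := by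
          ext r; simp [F, indicator_apply]
        rw [hF_s, integral_of_le hab, setIntegral_indicator measurableSet_Ici,
          setIntegral_congr_set ((ae_eq_refl _).inter Ioi_ae_eq_Ici.symm), Ioc_inter_Ioi,
          max_eq_right hs.1, integral_of_le hs.2]
    _ = ∫ r in a..b, ∫ s in a..b, F r s := (intervalIntegral_intervalIntegral_swap hint).symm
    _ = ∫ r in a..b, ∫ s in a..r, K r s := by
        refine integral_congr fun r hr => ?_
        rw [uIcc_of_le hab] at hr
        exact integral_indicator hr

theorem ContinuousOn.exists_continuous_eqOn_Icc {α β : Type*} [LinearOrder α]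
    [TopologicalSpace α] [OrderTopology α] [TopologicalSpace β] {a b : α} {f : α → β} (hab : a ≤ b)
    (hf : ContinuousOn f (Icc a b)) : ∃ F : α → β, Continuous F ∧ EqOn F f (Icc a b) :=
  ⟨IccExtend hab ((Icc a b).domRestrict f), hf.domRestrict.Icc_extend',
    fun _ hx => IccExtend_of_mem hab _ hx⟩

theorem integral_eq_sub_of_hasDerivWithinAt_Icc {E : Type*} [NormedAddCommGroup E]
    [NormedSpace ℝ E] [CompleteSpace E] {f f' : ℝ → E} {a b x : ℝ}
    (hf : ∀ y ∈ Icc a b, HasDerivWithinAt f (f' y) (Icc a b) y)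
    (hf' : ContinuousOn f' (Icc a b)) (hx : x ∈ Icc a b) :
    ∫ y in a..x, f' y = f x - f a := by
  have hsub : Icc a x ⊆ Icc a b := Icc_subset_Icc_right hx.2
  refine integral_eq_sub_of_hasDeriv_right_of_le hx.1
    (fun y hy => (hf y (hsub hy)).continuousWithinAt.mono hsub) (fun y hy => ?_)
    ((hf'.mono hsub).intervalIntegrable_of_Icc hx.1)
  exact ((hf y (hsub (Ioo_subset_Icc_self hy))).hasDerivAt
    (Icc_mem_nhds hy.1 (hy.2.trans_le hx.2))).hasDerivWithinAt

noncomputable def volterraConv (g f : ℝ → ℝ) (t : ℝ) : ℝ :=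
  ∫ s in (0:ℝ)..t, g (t - s) * f s

section VolterraConv

variable {g g' f : ℝ → ℝ} {T t : ℝ}

theorem continuous_volterraConv (hg : Continuous g) (hf : Continuous f) :
    Continuous (volterraConv g f) :=
  continuous_parametric_intervalIntegral_of_continuous (by fun_prop) continuous_id

theorem volterraConv_congr {g₁ g₂ f₁ f₂ : ℝ → ℝ} (hg : EqOn g₁ g₂ (Icc 0 T))
    (hf : EqOn f₁ f₂ (Icc 0 T)) : EqOn (volterraConv g₁ f₁) (volterraConv g₂ f₂) (Icc 0 T) := by
  intro t ht
  refine integral_congr fun s hs => ?_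
  rw [uIcc_of_le ht.1] at hs
  rw [hg ⟨by linarith [hs.2], by linarith [hs.1, ht.2]⟩, hf ⟨hs.1, hs.2.trans ht.2⟩]

theorem volterraConv_eq_add_integral (hg : Continuous g) (hg' : Continuous g')
    (hf : Continuous f) (ht : 0 ≤ t) (hftc : ∀ x ∈ Icc 0 t, ∫ u in (0:ℝ)..x, g' u = g x - g 0) :
    volterraConv g f t = g 0 * (∫ s in (0:ℝ)..t, f s) + ∫ r in (0:ℝ)..t, volterraConv g' f r := by
  have hsplit : ∫ s in (0:ℝ)..t, (g (t - s) - g 0) * f s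
      = volterraConv g f t - g 0 * ∫ s in (0:ℝ)..t, f s := by
    simp only [sub_mul]
    rw [intervalIntegral.integral_sub, intervalIntegral.integral_const_mul]
    · rfl
    all_goals exact Continuous.intervalIntegrable (by fun_prop) _ _
  have hinner : ∫ s in (0:ℝ)..t, (g (t - s) - g 0) * f s
      = ∫ s in (0:ℝ)..t, ∫ r in s..t, g' (r - s) * f s := by
    refine integral_congr fun s hs => ?_
    rw [uIcc_of_le ht] at hs
    rw [intervalIntegral.integral_mul_const, integral_comp_sub_right, sub_self,
      hftc (t - s) ⟨by linarith [hs.2], by linarith [hs.1]⟩]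
  have hswap := integral_integral_swap_triangle (K := fun r s => g' (r - s) * f s) (by fun_prop) ht
  unfold volterraConv at hsplit ⊢
  linarith

theorem hasDerivWithinAt_volterraConv_of_continuous (hg : Continuous g) (hg' : Continuous g')
    (hf : Continuous f) (hftc : ∀ x ∈ Icc 0 T, ∫ u in (0:ℝ)..x, g' u = g x - g 0)
    (ht : t ∈ Icc 0 T) :
    HasDerivWithinAt (volterraConv g f) (g 0 * f t + volterraConv g' f t) (Icc 0 T) t := by
  have hprim : HasDerivAt
      (fun τ => g 0 * (∫ s in (0:ℝ)..τ, f s) + ∫ r in (0:ℝ)..τ, volterraConv g' f r)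
      (g 0 * f t + volterraConv g' f t) t :=
    ((hf.integral_hasStrictDerivAt 0 t).hasDerivAt.const_mul (g 0)).fun_add
      ((continuous_volterraConv hg' hf).integral_hasStrictDerivAt 0 t).hasDerivAt
  refine hprim.hasDerivWithinAt.congr_of_mem (fun τ hτ => ?_) ht
  exact volterraConv_eq_add_integral hg hg' hf hτ.1
    fun x hx => hftc x ⟨hx.1, hx.2.trans hτ.2⟩

theorem continuousOn_volterraConv (hg : ContinuousOn g (Icc 0 T))
    (hf : ContinuousOn f (Icc 0 T)) : ContinuousOn (volterraConv g f) (Icc 0 T) := by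
  intro t ht
  obtain ⟨G, hG, hGg⟩ := hg.exists_continuous_eqOn_Icc (ht.1.trans ht.2)
  obtain ⟨F, hF, hFf⟩ := hf.exists_continuous_eqOn_Icc (ht.1.trans ht.2)
  exact (continuous_volterraConv hG hF).continuousOn.congr (volterraConv_congr hGg hFf).symm t ht

theorem hasDerivWithinAt_volterraConv
    (hg : ∀ x ∈ Icc 0 T, HasDerivWithinAt g (g' x) (Icc 0 T) x)
    (hg' : ContinuousOn g' (Icc 0 T)) (hf : ContinuousOn f (Icc 0 T)) (ht : t ∈ Icc 0 T) :
    HasDerivWithinAt (volterraConv g f) (g 0 * f t + volterraConv g' f t) (Icc 0 T) t := by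
  have hT : 0 ≤ T := ht.1.trans ht.2
  have h0 : (0:ℝ) ∈ Icc 0 T := left_mem_Icc.2 hT
  obtain ⟨G, hG, hGg⟩ :=
    ContinuousOn.exists_continuous_eqOn_Icc hT fun x hx => (hg x hx).continuousWithinAt
  obtain ⟨G', hG', hG'g⟩ := hg'.exists_continuous_eqOn_Icc hT
  obtain ⟨F, hF, hFf⟩ := hf.exists_continuous_eqOn_Icc hT
  have hftc : ∀ x ∈ Icc 0 T, ∫ u in (0:ℝ)..x, G' u = G x - G 0 := fun x hx => by
    rw [integral_congr (hG'g.mono (by rw [uIcc_of_le hx.1]; exact Icc_subset_Icc_right hx.2)),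
      hGg hx, hGg h0, integral_eq_sub_of_hasDerivWithinAt_Icc hg hg' hx]
  have hconv := hasDerivWithinAt_volterraConv_of_continuous hG hG' hF hftc ht
  rw [hGg h0, hFf ht, volterraConv_congr hG'g hFf ht] at hconv
  exact hconv.congr_of_mem (fun y hy => (volterraConv_congr hGg hFf hy).symm) ht

end VolterraConv

theorem stmt4_general (T : ℝ) (M M' M'' : ℝ → ℝ)
    (hM : ∀ t ∈ Set.Icc (0:ℝ) T, HasDerivWithinAt M (M' t) (Set.Icc 0 T) t)
    (hM' : ∀ t ∈ Set.Icc (0:ℝ) T, HasDerivWithinAt M' (M'' t) (Set.Icc 0 T) t)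
    (hM'' : ContinuousOn M'' (Set.Icc 0 T))
    (R : ℝ → ℝ) (hR : ContinuousOn R (Set.Icc 0 T))
    (hres : ∀ t ∈ Set.Icc (0:ℝ) T, R t + ∫ s in (0:ℝ)..t, M (t - s) * R s = M t) :
    ∃ R' R'' : ℝ → ℝ,
      (∀ t ∈ Set.Icc (0:ℝ) T, HasDerivWithinAt R (R' t) (Set.Icc 0 T) t) ∧
      (∀ t ∈ Set.Icc (0:ℝ) T, HasDerivWithinAt R' (R'' t) (Set.Icc 0 T) t) ∧
      ContinuousOn R'' (Set.Icc 0 T) ∧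
      (∀ t ∈ Set.Icc (0:ℝ) T,
        R' t = M' t - M 0 * R t - ∫ s in (0:ℝ)..t, M' (t - s) * R s) ∧
      (∀ t ∈ Set.Icc (0:ℝ) T,
        R'' t = M'' t - M 0 * R' t - M' 0 * R t - ∫ s in (0:ℝ)..t, M'' (t - s) * R s) := by
  have hM'c : ContinuousOn M' (Icc 0 T) := fun t ht => (hM' t ht).continuousWithinAt
  set R' : ℝ → ℝ := fun t => M' t - M 0 * R t - volterraConv M' R t
  have hR' : ∀ t ∈ Icc 0 T, HasDerivWithinAt R (R' t) (Icc 0 T) t := fun t ht =>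
    (((hM t ht).sub (hasDerivWithinAt_volterraConv hM hM'c hR ht)).congr_of_mem
      (fun y hy => eq_sub_of_add_eq (hres y hy)) ht).congr_deriv (by ring)
  have hR'c : ContinuousOn R' (Icc 0 T) :=
    (hM'c.sub (hR.const_smul (M 0))).sub (continuousOn_volterraConv hM'c hR)
  refine ⟨R', fun t => M'' t - M 0 * R' t - M' 0 * R t - volterraConv M'' R t, hR',
    fun t ht => ?_, ?_, fun _ _ => rfl, fun _ _ => rfl⟩
  · exact (((hM' t ht).sub ((hR' t ht).const_mul (M 0))).sub
      (hasDerivWithinAt_volterraConv hM' hM'' hR ht)).congr_deriv (by ring)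
  · exact ((hM''.sub (hR'c.const_smul (M 0))).sub (hR.const_smul (M' 0))).sub
      (continuousOn_volterraConv hM'' hR)

/-- If `M` is twice continuously differentiable on `[0,T]` (with derivatives `M'`, `M''`)
and `R` is its resolvent kernel, then `R` is twice continuously differentiable on `[0,T]`
with `R' = M' - M(0)R - M'*R` and `R'' = M'' - M(0)R' - M'(0)R - M''*R`. -/
theorem stmt4 (T : ℝ) (hT : 0 < T) (M M' M'' : ℝ → ℝ)
    (hM : ∀ t ∈ Set.Icc (0:ℝ) T, HasDerivWithinAt M (M' t) (Set.Icc 0 T) t)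
    (hM' : ∀ t ∈ Set.Icc (0:ℝ) T, HasDerivWithinAt M' (M'' t) (Set.Icc 0 T) t)
    (hM'' : ContinuousOn M'' (Set.Icc 0 T))
    (R : ℝ → ℝ) (hR : ContinuousOn R (Set.Icc 0 T))
    (hres : ∀ t ∈ Set.Icc (0:ℝ) T, R t + ∫ s in (0:ℝ)..t, M (t - s) * R s = M t) :
    ∃ R' R'' : ℝ → ℝ,
      (∀ t ∈ Set.Icc (0:ℝ) T, HasDerivWithinAt R (R' t) (Set.Icc 0 T) t) ∧
      (∀ t ∈ Set.Icc (0:ℝ) T, HasDerivWithinAt R' (R'' t) (Set.Icc 0 T) t) ∧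
      ContinuousOn R'' (Set.Icc 0 T) ∧
      (∀ t ∈ Set.Icc (0:ℝ) T,
        R' t = M' t - M 0 * R t - ∫ s in (0:ℝ)..t, M' (t - s) * R s) ∧
      (∀ t ∈ Set.Icc (0:ℝ) T,
        R'' t = M'' t - M 0 * R' t - M' 0 * R t - ∫ s in (0:ℝ)..t, M'' (t - s) * R s) :=
  stmt4_general T M M' M'' hM hM' hM'' R hR hres
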